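/- Let 0 < ω < 1, set k = √(1 − ω²) and aₛ = √(1 − ω²)/ω, fix t₀ ∈ ℝ, and let u(x, t) = 4 arctan( aₛ sin(ω (t − t₀)) / cosh(k x) ). Then for every fixed t ∈ ℝ, the energy density x ↦ (1/2)(∂u/∂t(x,t))² + (1/2)(∂u/∂x(x,t))² + 1 − cos(u(x,t)) is a nonnegative function that is integrable over ℝ; that is, the static breather is a finite-energy solution of the sine-Gordon equation. -/

import Mathlib

open Real MeasureTheory

/-- The static breather `u(x,t) = 4 arctan(aₛ sin(ω(t − t₀)) / cosh(k x))`. -/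
noncomputable def staticBreather (aₛ k ω t₀ : ℝ) (x t : ℝ) : ℝ :=
  4 * Real.arctan (aₛ * Real.sin (ω * (t - t₀)) / Real.cosh (k * x))

/-- Energy density of the static breather at position `x` and time `t`:
`(1/2) u_t² + (1/2) u_x² + 1 − cos u`. -/
noncomputable def breatherEnergyDensity (aₛ k ω t₀ : ℝ) (x t : ℝ) : ℝ :=
  (1 / 2) * (deriv (fun s : ℝ => staticBreather aₛ k ω t₀ x s) t) ^ 2
    + (1 / 2) * (deriv (fun y : ℝ => staticBreather aₛ k ω t₀ y t) x) ^ 2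
    + (1 - Real.cos (staticBreather aₛ k ω t₀ x t))

/-!
Write the breather as `u = 4 arctan q` with `q = aₛ sin (ω (t - t₀)) / cosh (k x)`.
Then `u_t = 4 q_t / (1 + q²)`, `u_x = 4 q_x / (1 + q²)` and `1 - cos u = 8 q² / (1 + q²)²`,
so the energy density is `8 (q_t² + q_x² + q²) / (1 + q²)² ≤ 8 (q_t² + q_x² + q²)`.
Each of `q_t`, `q_x`, `q` is bounded by a constant times `1 / cosh (k x)`, and
`1 / cosh² (k x) ≤ 1 / (1 + k² x²)` is integrable as soon as `k ≠ 0`.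
-/

lemma cos_four_mul_arctan (q : ℝ) :
    cos (4 * arctan q) = 1 - 8 * q ^ 2 / (1 + q ^ 2) ^ 2 := by
  have hq : 1 + q ^ 2 ≠ 0 := by positivity
  rw [show 4 * arctan q = 2 * (2 * arctan q) by ring, cos_two_mul, cos_two_mul, cos_sq_arctan]
  field_simp
  ring

lemma energyDensity_four_mul_arctan (q qt qx : ℝ) :
    (1 / 2) * (4 * qt / (1 + q ^ 2)) ^ 2 + (1 / 2) * (4 * qx / (1 + q ^ 2)) ^ 2
      + (1 - cos (4 * arctan q)) = 8 * (qt ^ 2 + qx ^ 2 + q ^ 2) / (1 + q ^ 2) ^ 2 := by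
  have hq : 1 + q ^ 2 ≠ 0 := by positivity
  rw [cos_four_mul_arctan]
  field_simp
  ring

lemma HasDerivAt.four_mul_arctan {f : ℝ → ℝ} {f' x : ℝ} (hf : HasDerivAt f f' x) :
    HasDerivAt (fun y => 4 * Real.arctan (f y)) (4 * f' / (1 + f x ^ 2)) x :=
  (hf.arctan.const_mul 4).congr_deriv (by ring)

lemma sq_le_sinh_sq (y : ℝ) : y ^ 2 ≤ sinh y ^ 2 := by
  rw [← sq_abs y, ← sq_abs (sinh y), abs_sinh]
  exact pow_le_pow_left₀ (abs_nonneg y) (self_le_sinh_iff.mpr (abs_nonneg y)) 2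

lemma integrable_inv_cosh_sq {k : ℝ} (hk : k ≠ 0) :
    Integrable fun x : ℝ => (cosh (k * x) ^ 2)⁻¹ := by
  refine (integrable_inv_one_add_sq.comp_mul_left' hk).mono'
    (by fun_prop) (Filter.Eventually.of_forall fun x => ?_)
  rw [norm_inv, norm_pow, Real.norm_eq_abs, abs_of_pos (cosh_pos _), cosh_sq']
  exact inv_anti₀ (by positivity) (add_le_add_right (sq_le_sinh_sq _) 1)

lemma sq_mul_div_le {a s c : ℝ} (hs : s ^ 2 ≤ 1) : (a * s / c) ^ 2 ≤ a ^ 2 / c ^ 2 := by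
  rw [div_pow, mul_pow]
  gcongr
  exact mul_le_of_le_one_right (sq_nonneg a) hs

noncomputable def breatherProfile (aₛ k ω t₀ x t : ℝ) : ℝ :=
  aₛ * sin (ω * (t - t₀)) / cosh (k * x)

section

variable (aₛ k ω t₀ x t : ℝ)

lemma hasDerivAt_breatherProfile_time :
    HasDerivAt (fun s => breatherProfile aₛ k ω t₀ x s)
      (aₛ * ω * cos (ω * (t - t₀)) / cosh (k * x)) t :=
  ((((hasDerivAt_id' t).sub_const t₀).const_mul ω).sin.const_mul aₛ |>.div_const _).congr_deriv
    (by ring)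

lemma hasDerivAt_breatherProfile_space :
    HasDerivAt (fun y => breatherProfile aₛ k ω t₀ y t)
      (-(aₛ * sin (ω * (t - t₀)) * k * sinh (k * x) / cosh (k * x) ^ 2)) x :=
  ((hasDerivAt_const x (aₛ * sin (ω * (t - t₀)))).div
    ((hasDerivAt_id' x).const_mul k).cosh (cosh_pos _).ne').congr_deriv (by ring)

lemma hasDerivAt_staticBreather_time :
    HasDerivAt (fun s => staticBreather aₛ k ω t₀ x s)
      (4 * (aₛ * ω * cos (ω * (t - t₀)) / cosh (k * x))
        / (1 + breatherProfile aₛ k ω t₀ x t ^ 2)) t :=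
  (hasDerivAt_breatherProfile_time ..).four_mul_arctan

lemma hasDerivAt_staticBreather_space :
    HasDerivAt (fun y => staticBreather aₛ k ω t₀ y t)
      (4 * -(aₛ * sin (ω * (t - t₀)) * k * sinh (k * x) / cosh (k * x) ^ 2)
        / (1 + breatherProfile aₛ k ω t₀ x t ^ 2)) x :=
  (hasDerivAt_breatherProfile_space ..).four_mul_arctan

lemma breatherEnergyDensity_eq :
    breatherEnergyDensity aₛ k ω t₀ x t =
      8 * ((aₛ * ω * cos (ω * (t - t₀)) / cosh (k * x)) ^ 2
        + (aₛ * sin (ω * (t - t₀)) * k * sinh (k * x) / cosh (k * x) ^ 2) ^ 2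
        + breatherProfile aₛ k ω t₀ x t ^ 2)
        / (1 + breatherProfile aₛ k ω t₀ x t ^ 2) ^ 2 := by
  rw [breatherEnergyDensity, (hasDerivAt_staticBreather_time ..).deriv,
    (hasDerivAt_staticBreather_space ..).deriv, staticBreather, ← breatherProfile,
    energyDensity_four_mul_arctan, neg_sq]

lemma breatherEnergyDensity_nonneg : 0 ≤ breatherEnergyDensity aₛ k ω t₀ x t := by
  rw [breatherEnergyDensity_eq]
  positivity

lemma breatherEnergyDensity_le :
    breatherEnergyDensity aₛ k ω t₀ x t ≤
      8 * aₛ ^ 2 * (ω ^ 2 + k ^ 2 + 1) * (cosh (k * x) ^ 2)⁻¹ := by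
  set c := cosh (k * x)
  have hc : 0 < c := cosh_pos _
  have h_time : (aₛ * ω * cos (ω * (t - t₀)) / c) ^ 2 ≤ (aₛ * ω) ^ 2 / c ^ 2 :=
    sq_mul_div_le (cos_sq_le_one _)
  have h_space :
      (aₛ * sin (ω * (t - t₀)) * k * sinh (k * x) / c ^ 2) ^ 2 ≤ (aₛ * k) ^ 2 / c ^ 2 := by
    have h_tanh : (sinh (k * x) / c) ^ 2 ≤ 1 := by
      rw [div_pow, div_le_one (by positivity), cosh_sq]
      linarith
    rw [show aₛ * sin (ω * (t - t₀)) * k * sinh (k * x) / c ^ 2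
        = aₛ * k * (sin (ω * (t - t₀)) * (sinh (k * x) / c)) / c by field_simp]
    refine sq_mul_div_le ?_
    rw [mul_pow]
    exact mul_le_one₀ (sin_sq_le_one _) (sq_nonneg _) h_tanh
  have h_profile : breatherProfile aₛ k ω t₀ x t ^ 2 ≤ aₛ ^ 2 / c ^ 2 :=
    sq_mul_div_le (sin_sq_le_one _)
  calc breatherEnergyDensity aₛ k ω t₀ x t
      ≤ 8 * ((aₛ * ω * cos (ω * (t - t₀)) / c) ^ 2
        + (aₛ * sin (ω * (t - t₀)) * k * sinh (k * x) / c ^ 2) ^ 2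
        + breatherProfile aₛ k ω t₀ x t ^ 2) := by
        rw [breatherEnergyDensity_eq]
        exact div_le_self (by positivity) (one_le_pow₀ (le_add_of_nonneg_right (sq_nonneg _)))
    _ ≤ 8 * ((aₛ * ω) ^ 2 / c ^ 2 + (aₛ * k) ^ 2 / c ^ 2 + aₛ ^ 2 / c ^ 2) := by gcongr
    _ = 8 * aₛ ^ 2 * (ω ^ 2 + k ^ 2 + 1) * (c ^ 2)⁻¹ := by ring

lemma continuous_breatherEnergyDensity :
    Continuous fun x => breatherEnergyDensity aₛ k ω t₀ x t := by
  simp_rw [breatherEnergyDensity_eq, breatherProfile]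
  fun_prop (disch := intro; positivity)

end

theorem staticBreather_finite_energy_general
    (ω k aₛ t₀ : ℝ) (hω0 : 0 < ω) (hω1 : ω < 1)
    (hk : k = Real.sqrt (1 - ω ^ 2)) :
    ∀ t : ℝ,
      (∀ x : ℝ, 0 ≤ breatherEnergyDensity aₛ k ω t₀ x t)
      ∧ Integrable (fun x : ℝ => breatherEnergyDensity aₛ k ω t₀ x t) volume := by
  intro t
  have hk0 : k ≠ 0 := by
    rw [hk, Real.sqrt_ne_zero']
    nlinarith
  refine ⟨fun x => breatherEnergyDensity_nonneg aₛ k ω t₀ x t, ?_⟩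
  refine ((integrable_inv_cosh_sq hk0).const_mul (8 * aₛ ^ 2 * (ω ^ 2 + k ^ 2 + 1))).mono'
    (continuous_breatherEnergyDensity aₛ k ω t₀ t).aestronglyMeasurable
    (Filter.Eventually.of_forall fun x => ?_)
  rw [Real.norm_of_nonneg (breatherEnergyDensity_nonneg aₛ k ω t₀ x t)]
  exact breatherEnergyDensity_le aₛ k ω t₀ x t

/-- For `0 < ω < 1`, `k = √(1 − ω²)`, `aₛ = √(1 − ω²)/ω`, the energy density
of the static breather is nonnegative and integrable over `ℝ` at each fixed
time: the static breather has finite energy. -/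
theorem staticBreather_finite_energy
    (ω k aₛ t₀ : ℝ) (hω0 : 0 < ω) (hω1 : ω < 1)
    (hk : k = Real.sqrt (1 - ω ^ 2)) (ha : aₛ = Real.sqrt (1 - ω ^ 2) / ω) :
    ∀ t : ℝ,
      (∀ x : ℝ, 0 ≤ breatherEnergyDensity aₛ k ω t₀ x t)
      ∧ Integrable (fun x : ℝ => breatherEnergyDensity aₛ k ω t₀ x t) volume :=
  staticBreather_finite_energy_general ω k aₛ t₀ hω0 hω1 hk
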